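/- Let G ⊂ ℝ × (0,∞) × ℝ^N be a bounded measurable set, let M > 0, and let f ∈ C²([−M,M]) with f''(θ) ≠ 0 for almost every θ ∈ [−M,M]. Let ρ : ℝ^N → [0,∞) be bounded and such that ρ(y) > 0 for almost every y appearing in G. Let (u^ε) be a family and u a function, all measurable on G with values in [−M,M], such that ∫_G [ (u^ε − u)∫_u^{u^ε} (f'(s))² ds − (f(u^ε) − f(u))² ] ρ(y)² d(x,t,y) → 0 as ε → 0. Then u^ε → u in Lebesgue measure on G, i.e., for every α > 0 the Lebesgue measure of {(x,t,y) ∈ G : |u^ε(x,t,y) − u(x,t,y)| > α} tends to 0 as ε → 0; in particular, some subsequence of (u^ε) converges to u almost everywhere on G. -/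

import Mathlib

/-!
Writing `m` for the mean slope of `f` on `[v, w]`, `Υ(v, w) = (w - v) ∫_v^w (f' - m)²`. As `f''`
vanishes only on a null set, `f'` is constant on no subinterval of `[-M, M]`, so `Υ > 0` off the
diagonal, and by compactness `Υ ≥ c > 0` where `|w - v| ≥ α`. Thus `c ∫_{|uε - u| > α} ρ² → 0`.
Since `ρ² > 0` a.e. on the finite-measure set `G`, the set `{ρ² < δ}` has small measure for small
`δ`, while Chebyshev bounds the rest by `δ⁻¹ ∫_{|uε - u| > α} ρ²`. The subsequence comes from
Riesz's theorem on convergence in measure.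
-/

open MeasureTheory Set Filter intervalIntegral

noncomputable section

open Topology

/-- The paper's `Υ(v, w)`. -/
def defect (f : ℝ → ℝ) (v w : ℝ) : ℝ :=
  (w - v) * (∫ s in v..w, deriv f s ^ 2) - (f w - f v) ^ 2

section Defect

variable {f : ℝ → ℝ}

theorem defect_symm (f : ℝ → ℝ) (v w : ℝ) : defect f v w = defect f w v := by
  rw [defect, defect, integral_symm]
  ring

theorem defect_eq_mul_integral_sq (hf : ContDiff ℝ 1 f) (v w : ℝ) :
    defect f v w = (w - v) * ∫ s in v..w, (deriv f s - (f w - f v) / (w - v)) ^ 2 := by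
  have hf' : Continuous (deriv f) := hf.continuous_deriv le_rfl
  have hftc : ∫ s in v..w, deriv f s = f w - f v :=
    integral_deriv_eq_sub (fun x _ => (hf.differentiable one_ne_zero).differentiableAt)
      (hf'.intervalIntegrable v w)
  set m := (f w - f v) / (w - v)
  have hm : m * (w - v) = f w - f v :=
    div_mul_cancel_of_imp fun h => by rw [sub_eq_zero.1 h, sub_self]
  have hexpand : ∫ s in v..w, (deriv f s - m) ^ 2
      = (∫ s in v..w, deriv f s ^ 2) - 2 * m * (f w - f v) + m ^ 2 * (w - v) := by
    have hsq (s : ℝ) : (deriv f s - m) ^ 2 = deriv f s ^ 2 - 2 * m * deriv f s + m ^ 2 := by ring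
    simp_rw [hsq]
    rw [integral_add ((by fun_prop : Continuous _).intervalIntegrable _ _)
        (continuous_const.intervalIntegrable _ _),
      integral_sub ((by fun_prop : Continuous _).intervalIntegrable _ _)
        ((by fun_prop : Continuous _).intervalIntegrable _ _),
      intervalIntegral.integral_const_mul, hftc, intervalIntegral.integral_const, smul_eq_mul]
    ring
  rw [defect, hexpand]
  linear_combination (f w - f v - m * (w - v)) * hm

theorem defect_nonneg (hf : ContDiff ℝ 1 f) (v w : ℝ) : 0 ≤ defect f v w := by
  wlog hvw : v ≤ w generalizing v w
  · rw [defect_symm]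
    exact this w v (le_of_not_ge hvw)
  rw [defect_eq_mul_integral_sq hf]
  exact mul_nonneg (sub_nonneg.2 hvw) (integral_nonneg hvw fun _ _ => sq_nonneg _)

theorem continuous_defect (hf : ContDiff ℝ 1 f) :
    Continuous fun q : ℝ × ℝ => defect f q.1 q.2 := by
  have hf' : Continuous (deriv f) := hf.continuous_deriv le_rfl
  have hint (a b : ℝ) : IntervalIntegrable (fun s => deriv f s ^ 2) volume a b :=
    (hf'.pow 2).intervalIntegrable a b
  have hF : Continuous fun t => ∫ s in (0 : ℝ)..t, deriv f s ^ 2 := continuous_primitive hint 0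
  have hfc : Continuous f := hf.continuous
  have hsplit : (fun q : ℝ × ℝ => defect f q.1 q.2) = fun q => (q.2 - q.1) *
      ((∫ s in (0 : ℝ)..q.2, deriv f s ^ 2) - ∫ s in (0 : ℝ)..q.1, deriv f s ^ 2)
        - (f q.2 - f q.1) ^ 2 :=
    funext fun q => by rw [defect, integral_interval_sub_left (hint 0 q.2) (hint 0 q.1)]
  rw [hsplit]
  fun_prop

theorem exists_abs_defect_le (hf : ContDiff ℝ 1 f) (a b : ℝ) :
    ∃ B, ∀ v ∈ Icc a b, ∀ w ∈ Icc a b, |defect f v w| ≤ B := by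
  obtain ⟨B, hB⟩ := (isCompact_Icc.prod isCompact_Icc).exists_bound_of_continuousOn
    (continuous_defect hf).continuousOn
  exact ⟨B, fun v hv w hw => hB (v, w) ⟨hv, hw⟩⟩

theorem exists_ne_of_ae_deriv_ne_zero {g : ℝ → ℝ} {a b v w : ℝ}
    (hg : ∀ᵐ x ∂volume.restrict (Icc a b), deriv g x ≠ 0) (hav : a ≤ v) (hwb : w ≤ b)
    (hvw : v < w) (k : ℝ) : ∃ x ∈ Ioo v w, g x ≠ k := by
  by_contra! hconst
  have hg' : ∀ᵐ x ∂volume.restrict (Ioo v w), deriv g x ≠ 0 :=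
    ae_restrict_of_ae_restrict_of_subset (Ioo_subset_Icc_self.trans (Icc_subset_Icc hav hwb)) hg
  have : (ae (volume.restrict (Ioo v w))).NeBot :=
    ae_neBot.2 (by simp [Measure.restrict_eq_zero, hvw])
  obtain ⟨x, hx, hgx⟩ := (ae_restrict_mem measurableSet_Ioo |>.and hg').exists
  exact hgx ((eventuallyEq_of_mem (isOpen_Ioo.mem_nhds hx) hconst).deriv_eq.trans (deriv_const x k))

theorem defect_pos {a b v w : ℝ} (hf : ContDiff ℝ 1 f)
    (hf'' : ∀ᵐ θ ∂volume.restrict (Icc a b), deriv (deriv f) θ ≠ 0)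
    (hv : v ∈ Icc a b) (hw : w ∈ Icc a b) (hvw : v ≠ w) : 0 < defect f v w := by
  wlog hlt : v < w generalizing v w
  · rw [defect_symm]
    exact this hw hv hvw.symm (lt_of_le_of_ne (not_lt.1 hlt) hvw.symm)
  obtain ⟨x, hx, hne⟩ := exists_ne_of_ae_deriv_ne_zero hf'' hv.1 hw.2 hlt ((f w - f v) / (w - v))
  rw [defect_eq_mul_integral_sq hf]
  refine mul_pos (sub_pos.2 hlt) (integral_pos hlt ?_ (fun _ _ => sq_nonneg _)
    ⟨x, Ioo_subset_Icc_self hx, sq_pos_of_ne_zero (sub_ne_zero.2 hne)⟩)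
  exact (((hf.continuous_deriv le_rfl).sub continuous_const).pow 2).continuousOn

theorem exists_pos_le_defect {a b α : ℝ} (hf : ContDiff ℝ 1 f)
    (hf'' : ∀ᵐ θ ∂volume.restrict (Icc a b), deriv (deriv f) θ ≠ 0) (hα : 0 < α) :
    ∃ c > 0, ∀ v ∈ Icc a b, ∀ w ∈ Icc a b, α ≤ |w - v| → c ≤ defect f v w := by
  have hK : IsCompact ((Icc a b ×ˢ Icc a b) ∩ {q : ℝ × ℝ | α ≤ |q.2 - q.1|}) :=
    (isCompact_Icc.prod isCompact_Icc).inter_right (isClosed_le continuous_const (by fun_prop))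
  obtain ⟨c, hc, hcK⟩ := hK.exists_forall_le' (continuous_defect hf).continuousOn
    fun q hq => defect_pos hf hf'' hq.1.1 hq.1.2
      fun h => (hα.trans_le hq.2).ne' (by rw [h, sub_self, abs_zero])
  exact ⟨c, hc, fun v hv w hw hvw => hcK (v, w) ⟨⟨hv, hw⟩, hvw⟩⟩

end Defect

section Measure

variable {X ι : Type*} [MeasurableSpace X] {μ : Measure X} {l : Filter ι}

theorem tendsto_setIntegral_nhds_zero_of_const_mul_le {w : X → ℝ} (hw : 0 ≤ᵐ[μ] w)
    (hwi : Integrable w μ) {Φ : ι → X → ℝ} (hΦ : ∀ i, 0 ≤ᵐ[μ] Φ i)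
    (hΦi : ∀ i, Integrable (Φ i) μ) (hlim : Tendsto (fun i => ∫ x, Φ i x ∂μ) l (𝓝 0))
    {c : ℝ} (hc : 0 < c) {A : ι → Set X} (hA : ∀ i, MeasurableSet (A i))
    (hle : ∀ i, ∀ x ∈ A i, c * w x ≤ Φ i x) :
    Tendsto (fun i => ∫ x in A i, w x ∂μ) l (𝓝 0) := by
  refine squeeze_zero (fun i => integral_nonneg_of_ae (ae_restrict_of_ae hw)) (fun i => ?_)
    (by simpa using hlim.const_mul c⁻¹)
  calc ∫ x in A i, w x ∂μ = c⁻¹ * ∫ x in A i, c * w x ∂μ := by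
        rw [MeasureTheory.integral_const_mul, inv_mul_cancel_left₀ hc.ne']
    _ ≤ c⁻¹ * ∫ x in A i, Φ i x ∂μ := mul_le_mul_of_nonneg_left
        (setIntegral_mono_on (hwi.integrableOn.const_mul c) (hΦi i).integrableOn (hA i) (hle i))
        (inv_nonneg.2 hc.le)
    _ ≤ c⁻¹ * ∫ x, Φ i x ∂μ := mul_le_mul_of_nonneg_left
        (setIntegral_le_integral (hΦi i) (hΦ i)) (inv_nonneg.2 hc.le)

theorem tendsto_measure_of_tendsto_setIntegral [IsFiniteMeasure μ] {w : X → ℝ}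
    (hw : ∀ᵐ x ∂μ, 0 < w x) (hwi : Integrable w μ) {A : ι → Set X}
    (hA : ∀ i, MeasurableSet (A i)) (hlim : Tendsto (fun i => ∫ x in A i, w x ∂μ) l (𝓝 0)) :
    Tendsto (fun i => μ (A i)) l (𝓝 0) := by
  have hsmall : Tendsto (fun δ => μ.real {x | w x < δ}) (𝓝[>] 0) (𝓝 0) := by
    have hinter := tendsto_measure_biInter_gt (μ := μ) (s := fun δ => {x | w x < δ}) (a := 0)
      (fun _ _ => nullMeasurableSet_lt hwi.aemeasurable aemeasurable_const)
      (fun _ _ _ hij _ hx => lt_of_lt_of_le hx hij) ⟨1, one_pos, measure_ne_top _ _⟩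
    have hnull : μ (⋂ δ > 0, {x | w x < δ}) = 0 := by
      refine measure_mono_null ?_ (ae_iff.1 hw)
      intro x hx hpos
      simp only [mem_iInter] at hx
      exact lt_irrefl (w x) (hx (w x) hpos)
    rw [hnull] at hinter
    exact (ENNReal.tendsto_toReal ENNReal.zero_ne_top).comp hinter
  suffices Tendsto (fun i => μ.real (A i)) l (𝓝 0) by
    exact (ENNReal.tendsto_toReal_iff (fun i => measure_ne_top μ (A i)) ENNReal.zero_ne_top).1
      (by simpa only [ENNReal.toReal_zero, measureReal_def] using this)
  rw [Metric.tendsto_nhds]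
  intro ε hε
  obtain ⟨δ, hδε, hδ⟩ := ((hsmall.eventually (eventually_lt_nhds (half_pos hε))).and
    self_mem_nhdsWithin).exists
  filter_upwards [hlim.eventually (eventually_lt_nhds (mul_pos hδ (half_pos hε)))] with i hi
  have hmarkov : δ * μ.real (A i ∩ {x | δ ≤ w x}) ≤ ∫ x in A i, w x ∂μ := by
    have := mul_meas_ge_le_integral_of_nonneg (μ := μ.restrict (A i))
      (ae_restrict_of_ae (hw.mono fun _ h => h.le)) hwi.integrableOn δ
    rwa [measureReal_restrict_apply' (hA i), inter_comm] at this
  have hsplit : A i ⊆ (A i ∩ {x | δ ≤ w x}) ∪ {x | w x < δ} := fun x hx =>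
    (le_or_gt δ (w x)).imp (fun h => ⟨hx, h⟩) id
  rw [Real.dist_eq, sub_zero, abs_of_nonneg measureReal_nonneg]
  calc μ.real (A i) ≤ μ.real (A i ∩ {x | δ ≤ w x}) + μ.real {x | w x < δ} :=
        (measureReal_mono hsplit).trans (measureReal_union_le _ _)
    _ < ε / 2 + ε / 2 :=
        add_lt_add (lt_of_mul_lt_mul_left (hmarkov.trans_lt hi) hδ.le) hδε
    _ = ε := add_halves ε

theorem tendstoInMeasure_of_tendsto_measure_lt_dist {E : Type*} [PseudoMetricSpace E]
    {g : ι → X → E} {h : X → E}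
    (H : ∀ ε > 0, Tendsto (fun i => μ {x | ε < dist (g i x) (h x)}) l (𝓝 0)) :
    TendstoInMeasure μ g l h := by
  rw [tendstoInMeasure_iff_dist]
  intro ε hε
  exact tendsto_of_tendsto_of_tendsto_of_le_of_le tendsto_const_nhds (H (ε / 2) (half_pos hε))
    (fun _ => zero_le) fun _ => measure_mono fun _ hx => (half_lt_self hε).trans_le hx

end Measure

theorem convergence_in_measure_from_defect_general
    (N : ℕ) (G : Set (ℝ × ℝ × (Fin N → ℝ)))
    (hGmeas : MeasurableSet G) (hGbdd : Bornology.IsBounded G)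
    (M : ℝ) (f : ℝ → ℝ) (hf : ContDiff ℝ 2 f)
    (hf'' : ∀ᵐ θ ∂(volume.restrict (Icc (-M) M)), deriv (deriv f) θ ≠ 0)
    (ρ : (Fin N → ℝ) → ℝ) (hρmeas : Measurable ρ)
    (hρbdd : ∃ C, ∀ y, ρ y ≤ C)
    (hρpos : ∀ᵐ p ∂(volume.restrict G), 0 < ρ p.2.2)
    (uε : ℕ → (ℝ × ℝ × (Fin N → ℝ)) → ℝ) (u : (ℝ × ℝ × (Fin N → ℝ)) → ℝ)
    (huεmeas : ∀ n, Measurable (uε n)) (humeas : Measurable u)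
    (huεval : ∀ n p, uε n p ∈ Icc (-M) M) (huval : ∀ p, u p ∈ Icc (-M) M)
    (hdefect : Tendsto (fun n => ∫ p in G,
        ((uε n p - u p) * (∫ s in (u p)..(uε n p), (deriv f s) ^ 2)
          - (f (uε n p) - f (u p)) ^ 2) * (ρ p.2.2) ^ 2) atTop (nhds 0)) :
    (∀ α > 0, Tendsto (fun n => volume {p ∈ G | α < |uε n p - u p|}) atTop (nhds 0)) ∧
    ∃ σ : ℕ → ℕ, StrictMono σ ∧
      ∀ᵐ p ∂(volume.restrict G),
        Tendsto (fun n => uε (σ n) p) atTop (nhds (u p)) := by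
  obtain ⟨C, hC⟩ := hρbdd
  have hf1 : ContDiff ℝ 1 f := hf.of_le one_le_two
  have : IsFiniteMeasure (volume.restrict G) :=
    isFiniteMeasure_restrict.2 hGbdd.measure_lt_top.ne
  have hρ2 : Integrable (fun p => ρ p.2.2 ^ 2) (volume.restrict G) := by
    have hmeas : Measurable fun p : ℝ × ℝ × (Fin N → ℝ) => ρ p.2.2 ^ 2 := by fun_prop
    refine .of_bound hmeas.aestronglyMeasurable (C ^ 2) ?_
    filter_upwards [hρpos] with p hp
    rw [Real.norm_of_nonneg (sq_nonneg _)]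
    exact pow_le_pow_left₀ hp.le (hC _) 2
  obtain ⟨B, hB⟩ := exists_abs_defect_le hf1 (-M) M
  have hΦ (n : ℕ) : Integrable (fun p => defect f (u p) (uε n p) * ρ p.2.2 ^ 2)
      (volume.restrict G) :=
    hρ2.bdd_mul ((continuous_defect hf1).measurable.comp
        (humeas.prodMk (huεmeas n))).aestronglyMeasurable
      (ae_of_all _ fun p => hB _ (huval p) _ (huεval n p))
  have hmeas : ∀ α > 0,
      Tendsto (fun n => volume.restrict G {p | α < |uε n p - u p|}) atTop (𝓝 0) := by
    intro α hα
    obtain ⟨c, hc, hcα⟩ := exists_pos_le_defect hf1 hf'' hα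
    have hA (n : ℕ) : MeasurableSet {p | α < |uε n p - u p|} :=
      measurableSet_lt measurable_const ((huεmeas n).sub humeas).abs
    refine tendsto_measure_of_tendsto_setIntegral (hρpos.mono fun _ hp => pow_pos hp 2) hρ2 hA ?_
    exact tendsto_setIntegral_nhds_zero_of_const_mul_le (ae_of_all _ fun _ => sq_nonneg _) hρ2
      (fun n => ae_of_all _ fun _ => mul_nonneg (defect_nonneg hf1 _ _) (sq_nonneg _)) hΦ
      hdefect hc hA fun n p hp =>
        mul_le_mul_of_nonneg_right (hcα _ (huval p) _ (huεval n p) hp.le) (sq_nonneg _)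
  refine ⟨fun α hα => ?_,
    (tendstoInMeasure_of_tendsto_measure_lt_dist hmeas).exists_seq_tendsto_ae⟩
  convert hmeas α hα using 2
  rw [Measure.restrict_apply' hGmeas, inter_comm]
  rfl

/-- convergence in measure (and a.e. convergence of a subsequence)
from the vanishing of the compensated-compactness defect
`∫_G [ (u^ε − u)∫_u^{u^ε}(f')² − (f(u^ε) − f(u))² ] ρ²`. -/
theorem convergence_in_measure_from_defect
    (N : ℕ) (G : Set (ℝ × ℝ × (Fin N → ℝ)))
    (hGmeas : MeasurableSet G) (hGbdd : Bornology.IsBounded G)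
    (hGsub : ∀ p ∈ G, 0 < p.2.1)
    (M : ℝ) (hM : 0 < M) (f : ℝ → ℝ) (hf : ContDiff ℝ 2 f)
    (hf'' : ∀ᵐ θ ∂(volume.restrict (Icc (-M) M)), deriv (deriv f) θ ≠ 0)
    (ρ : (Fin N → ℝ) → ℝ) (hρmeas : Measurable ρ)
    (hρbdd : ∃ C, ∀ y, ρ y ≤ C) (hρnonneg : ∀ y, 0 ≤ ρ y)
    (hρpos : ∀ᵐ p ∂(volume.restrict G), 0 < ρ p.2.2)
    (uε : ℕ → (ℝ × ℝ × (Fin N → ℝ)) → ℝ) (u : (ℝ × ℝ × (Fin N → ℝ)) → ℝ)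
    (huεmeas : ∀ n, Measurable (uε n)) (humeas : Measurable u)
    (huεval : ∀ n p, uε n p ∈ Icc (-M) M) (huval : ∀ p, u p ∈ Icc (-M) M)
    (hdefect : Tendsto (fun n => ∫ p in G,
        ((uε n p - u p) * (∫ s in (u p)..(uε n p), (deriv f s) ^ 2)
          - (f (uε n p) - f (u p)) ^ 2) * (ρ p.2.2) ^ 2) atTop (nhds 0)) :
    (∀ α > 0, Tendsto (fun n => volume {p ∈ G | α < |uε n p - u p|}) atTop (nhds 0)) ∧
    ∃ σ : ℕ → ℕ, StrictMono σ ∧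
      ∀ᵐ p ∂(volume.restrict G),
        Tendsto (fun n => uε (σ n) p) atTop (nhds (u p)) :=
  convergence_in_measure_from_defect_general N G hGmeas hGbdd M f hf hf'' ρ hρmeas hρbdd hρpos uε u
    huεmeas humeas huεval huval hdefect
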